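/- arXiv:1108.0939 — 3 statements merged into one kernel-verified Lean document; each statement's English description precedes it below -/
import Mathlib

section
/- Lipschitz continuity of the scaled Fraenkel asymmetry: for any measurable sets E, E' ⊂ ℝⁿ of positive finite measure, one has | |E| D(E) − |E'| D(E') | ≤ 2 |E Δ E'|. -/
/-!
`|E| D(E)` is the infimum of `|E Δ B|` over balls `B` with `|B| = |E|`, and this infimum is
Lipschitz in `E`. Given a ball `B' = B(x, r)` with `|B'| = |E'|`, take the concentric ball `B`
with `|B| = |E|`; since concentric balls are nested, `|B Δ B'| = ||E| - |E'|| ≤ |E Δ E'|`, and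
the triangle inequality for `Δ` gives `|E Δ B| ≤ |E Δ E'| + |E' Δ B'| + |E Δ E'|`.
-/

open MeasureTheory Metric Set

/-- The Fraenkel asymmetry of a measurable set `E ⊆ ℝⁿ`. -/
noncomputable def fraenkelAsymmetry {n : ℕ} (E : Set (EuclideanSpace ℝ (Fin n))) : ℝ :=
  sInf {t : ℝ | ∃ (x : EuclideanSpace ℝ (Fin n)) (r : ℝ),
    volume (ball x r) = volume E ∧
    t = (volume (symmDiff E (ball x r))).toReal / (volume E).toReal}

open scoped ENNReal symmDiff Pointwise

theorem abs_measureReal_sub_le_measureReal_symmDiff_of_ne_top {α : Type*} [MeasurableSpace α]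
    {μ : Measure α} {s t : Set α} (hs : μ s ≠ ∞) (ht : μ t ≠ ∞) :
    |μ.real s - μ.real t| ≤ μ.real (s ∆ t) := by
  -- the triangle inequality for `∆` through `∅`
  have hst := measureReal_symmDiff_le (μ := μ) (u := ⊥) hs ht
  have hts := measureReal_symmDiff_le (μ := μ) (u := ⊥) ht hs
  rw [symmDiff_comm t s] at hts
  simp only [symmDiff_bot] at hst hts
  rw [abs_sub_le_iff]
  constructor <;> linarith

section PseudoMetric

variable {X : Type*} [PseudoMetricSpace X] [MeasurableSpace X] (μ : Measure X)

theorem measureReal_ball_symmDiff_ball [OpensMeasurableSpace X] (x : X) {r s : ℝ}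
    (hr : μ (ball x r) ≠ ∞) (hs : μ (ball x s) ≠ ∞) :
    μ.real (ball x r ∆ ball x s) = |μ.real (ball x r) - μ.real (ball x s)| := by
  wlog hrs : r ≤ s generalizing r s
  · rw [symmDiff_comm, abs_sub_comm]
    exact this hs hr (le_of_not_ge hrs)
  have hsub : ball x r ⊆ ball x s := ball_subset_ball hrs
  rw [symmDiff_of_le hsub, measureReal_sdiff hsub measurableSet_ball hs, abs_sub_comm,
    abs_of_nonneg (sub_nonneg.2 (measureReal_mono hsub hs))]

noncomputable def scaledFraenkelAsymmetry (E : Set X) : ℝ :=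
  sInf {s | ∃ (x : X) (r : ℝ), μ (ball x r) = μ E ∧ s = μ.real (E ∆ ball x r)}

variable {μ} {E : Set X}

theorem scaledFraenkelAsymmetry_nonneg : 0 ≤ scaledFraenkelAsymmetry μ E :=
  Real.sInf_nonneg fun _ ⟨_, _, _, hs⟩ ↦ hs ▸ measureReal_nonneg

theorem scaledFraenkelAsymmetry_le {x : X} {r : ℝ} (h : μ (ball x r) = μ E) :
    scaledFraenkelAsymmetry μ E ≤ μ.real (E ∆ ball x r) :=
  csInf_le ⟨0, fun _ ⟨_, _, _, hs⟩ ↦ hs ▸ measureReal_nonneg⟩ ⟨x, r, h, rfl⟩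

theorem scaledFraenkelAsymmetry_eq_zero [Nonempty X] (hE : μ E = 0) :
    scaledFraenkelAsymmetry μ E = 0 := by
  obtain ⟨x⟩ := ‹Nonempty X›
  refine le_antisymm ?_ scaledFraenkelAsymmetry_nonneg
  have h := scaledFraenkelAsymmetry_le (μ := μ) (E := E) (x := x) (r := 0)
    (by rw [ball_zero, measure_empty, hE])
  rwa [ball_zero, ← bot_eq_empty, symmDiff_bot, measureReal_def, hE, ENNReal.toReal_zero] at h

end PseudoMetric

section AddHaar

variable {X : Type*} [NormedAddCommGroup X] [NormedSpace ℝ X] [MeasurableSpace X] [BorelSpace X]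
  [FiniteDimensional ℝ X] (μ : Measure X) [μ.IsAddHaarMeasure]

theorem exists_addHaar_ball_eq [Nontrivial X] (x : X) {m : ℝ≥0∞} (hm : m ≠ ∞) :
    ∃ r : ℝ, μ (ball x r) = m := by
  set c := μ (ball (0 : X) 1)
  have hc0 : c ≠ 0 := (measure_ball_pos μ 0 one_pos).ne'
  have hc : c ≠ ∞ := measure_ball_lt_top.ne
  have hd : (Module.finrank ℝ X : ℝ) ≠ 0 := Nat.cast_ne_zero.2 Module.finrank_pos.ne'
  set t := m.toReal / c.toReal
  have ht : 0 ≤ t := by positivity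
  refine ⟨t ^ (Module.finrank ℝ X : ℝ)⁻¹, ?_⟩
  rw [Measure.addHaar_ball μ x (by positivity), ← Real.rpow_natCast, ← Real.rpow_mul ht,
    inv_mul_cancel₀ hd, Real.rpow_one, ENNReal.ofReal_div_of_pos (ENNReal.toReal_pos hc0 hc),
    ENNReal.ofReal_toReal hm, ENNReal.ofReal_toReal hc, ENNReal.div_mul_cancel hc0 hc]

theorem exists_ball_measure_eq_measure (x : X) {E : Set X} (hE : μ E ≠ ∞) :
    ∃ r : ℝ, μ (ball x r) = μ E := by
  cases subsingleton_or_nontrivial X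
  · rcases E.eq_empty_or_nonempty with rfl | hne
    · exact ⟨0, by rw [ball_zero]⟩
    · exact ⟨1, by rw [(nonempty_ball.2 one_pos : (ball x 1).Nonempty).eq_univ, hne.eq_univ]⟩
  · exact exists_addHaar_ball_eq μ x hE

variable {μ} {E E' : Set X}

theorem scaledFraenkelAsymmetry_le_add (hE : μ E ≠ ∞) (hE' : μ E' ≠ ∞) :
    scaledFraenkelAsymmetry μ E ≤ scaledFraenkelAsymmetry μ E' + 2 * μ.real (E ∆ E') := by
  suffices scaledFraenkelAsymmetry μ E - 2 * μ.real (E ∆ E') ≤ scaledFraenkelAsymmetry μ E' by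
    linarith
  obtain ⟨r₀, hr₀⟩ := exists_ball_measure_eq_measure μ 0 hE'
  refine le_csInf ⟨_, 0, r₀, hr₀, rfl⟩ ?_
  rintro _ ⟨x, r, hr, rfl⟩
  obtain ⟨ρ, hρ⟩ := exists_ball_measure_eq_measure μ x hE
  have hballs : μ.real (ball x r ∆ ball x ρ) ≤ μ.real (E ∆ E') := by
    rw [measureReal_ball_symmDiff_ball μ x measure_ball_lt_top.ne measure_ball_lt_top.ne,
      measureReal_def, measureReal_def, hr, hρ, abs_sub_comm]
    exact abs_measureReal_sub_le_measureReal_symmDiff_of_ne_top hE hE'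
  have := calc
    scaledFraenkelAsymmetry μ E ≤ μ.real (E ∆ ball x ρ) := scaledFraenkelAsymmetry_le hρ
    _ ≤ μ.real (E ∆ E') + μ.real (E' ∆ ball x ρ) := measureReal_symmDiff_le _ hE hE'
    _ ≤ μ.real (E ∆ E') + (μ.real (E' ∆ ball x r) + μ.real (ball x r ∆ ball x ρ)) := by
      gcongr; exact measureReal_symmDiff_le _ hE' measure_ball_lt_top.ne
  linarith

theorem abs_scaledFraenkelAsymmetry_sub_le (hE : μ E ≠ ∞) (hE' : μ E' ≠ ∞) :
    |scaledFraenkelAsymmetry μ E - scaledFraenkelAsymmetry μ E'| ≤ 2 * μ.real (E ∆ E') := by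
  have h := scaledFraenkelAsymmetry_le_add hE' hE
  rw [symmDiff_comm] at h
  rw [abs_sub_le_iff]
  constructor <;> linarith [scaledFraenkelAsymmetry_le_add hE hE']

end AddHaar

theorem toReal_volume_mul_fraenkelAsymmetry {n : ℕ} {E : Set (EuclideanSpace ℝ (Fin n))}
    (hE : volume E ≠ ∞) :
    (volume E).toReal * fraenkelAsymmetry E = scaledFraenkelAsymmetry volume E := by
  set c := (volume E).toReal
  rcases eq_or_ne c 0 with hc | hc
  · have hE0 : volume E = 0 := ((ENNReal.toReal_eq_zero_iff _).1 hc).resolve_right hE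
    rw [hc, zero_mul, scaledFraenkelAsymmetry_eq_zero hE0]
  have hset : {t : ℝ | ∃ (x : EuclideanSpace ℝ (Fin n)) (r : ℝ),
      volume (ball x r) = volume E ∧ t = (volume (E ∆ ball x r)).toReal / c} =
      c⁻¹ • {s | ∃ (x : EuclideanSpace ℝ (Fin n)) (r : ℝ),
        volume (ball x r) = volume E ∧ s = volume.real (E ∆ ball x r)} := by
    ext t
    simp [Set.mem_smul_set, div_eq_inv_mul, measureReal_def, eq_comm]
  rw [fraenkelAsymmetry, hset, Real.sInf_smul_of_nonneg (inv_nonneg.2 ENNReal.toReal_nonneg),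
    smul_eq_mul, mul_inv_cancel_left₀ hc, scaledFraenkelAsymmetry]

theorem abs_measure_mul_fraenkel_sub_le_general {n : ℕ}
    (E E' : Set (EuclideanSpace ℝ (Fin n)))
    (hfin : volume E < ⊤)
    (hfin' : volume E' < ⊤) :
    |(volume E).toReal * fraenkelAsymmetry E -
      (volume E').toReal * fraenkelAsymmetry E'| ≤
      2 * (volume (symmDiff E E')).toReal := by
  rw [toReal_volume_mul_fraenkelAsymmetry hfin.ne, toReal_volume_mul_fraenkelAsymmetry hfin'.ne]
  exact abs_scaledFraenkelAsymmetry_sub_le hfin.ne hfin'.ne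

/-- Lipschitz continuity of the scaled Fraenkel asymmetry:
`| |E| D(E) − |E'| D(E') | ≤ 2 |E Δ E'|`. -/
theorem abs_measure_mul_fraenkel_sub_le {n : ℕ} (hn : 1 ≤ n)
    (E E' : Set (EuclideanSpace ℝ (Fin n)))
    (hE : MeasurableSet E) (hE' : MeasurableSet E')
    (h0 : 0 < volume E) (hfin : volume E < ⊤)
    (h0' : 0 < volume E') (hfin' : volume E' < ⊤) :
    |(volume E).toReal * fraenkelAsymmetry E -
      (volume E').toReal * fraenkelAsymmetry E'| ≤
      2 * (volume (symmDiff E E')).toReal :=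
  abs_measure_mul_fraenkel_sub_le_general E E' hfin hfin'
end

section
/- Let q > 1 and let E, E₁, E₂ ⊂ ℝⁿ be sets of positive finite measure with E₁ ∪ E₂ ⊂ E and E₁ ∩ E₂ = ∅. Then (|E| D(E)^q + |E₁| D(E₁)^q + |E₂| D(E₂)^q) / (|E| + |E₁ ∪ E₂|) ≥ min over balls B, B₁, B₂ with |B| = |E|, |B₁| = |E₁|, |B₂| = |E₂| of [ (‖χ_B − χ_{B₁} − χ_{B₂}‖_{L¹} − (|B| − |B₁| − |B₂|)) / (|E| + |E₁ ∪ E₂|) ]^q. -/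
open MeasureTheory Metric Set

/-!
For balls `Bᵢ` with `|Bᵢ| = |Eᵢ|`, the triangle inequality in `L¹` gives
`‖χ_B - χ_{B₁} - χ_{B₂}‖₁ ≤ Σ |Eᵢ Δ Bᵢ| + ‖χ_E - χ_{E₁} - χ_{E₂}‖₁`, and the last norm equals
`|E| - |E₁| - |E₂| = |B| - |B₁| - |B₂|` because `E₁, E₂` are disjoint subsets of `E`. Taking nearly
optimal balls, the bracket is therefore at most `ε` plus the mean of `D(E), D(E₁), D(E₂)` weighted by
`|E|, |E₁|, |E₂|`, whose total weight is `|E| + |E₁ ∪ E₂|`; Jensen's inequality for `t ↦ t^q` bounds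
the `q`-th power of this mean by the weighted mean of the `D(Eᵢ)^q`.
-/

open Filter Topology
open scoped symmDiff

local notation:max "χ" s:max => Set.indicator s (fun _ => (1 : ℝ))

section Indicator

variable {α : Type*}

lemma abs_indicator_one_sub_indicator_one (s t : Set α) (y : α) :
    |χ s y - χ t y| = χ (s ∆ t) y := by
  rw [← abs_indicator_symmDiff, abs_of_nonneg (indicator_nonneg (fun _ _ => zero_le_one) _)]

/-- The triangle inequality, in which `χ_E - χ_{E₁} - χ_{E₂}` is the indicator of `E \ (E₁ ∪ E₂)`. -/
lemma abs_indicator_sub_sub_le {E E₁ E₂ : Set α} (B B₁ B₂ : Set α) (hsub : E₁ ∪ E₂ ⊆ E)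
    (hdisj : Disjoint E₁ E₂) (y : α) :
    |χ B y - χ B₁ y - χ B₂ y|
      ≤ χ (E ∆ B) y + χ (E₁ ∆ B₁) y + χ (E₂ ∆ B₂) y + χ (E \ (E₁ ∪ E₂)) y := by
  have hrest : χ (E \ (E₁ ∪ E₂)) y = χ E y - χ E₁ y - χ E₂ y := by
    rw [indicator_sdiff hsub, indicator_union_of_disjoint hdisj]
    simp only [Pi.sub_apply]
    ring
  have hrest_nonneg : 0 ≤ χ (E \ (E₁ ∪ E₂)) y := indicator_nonneg (fun _ _ => zero_le_one) _
  rw [hrest] at hrest_nonneg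
  rw [← abs_indicator_one_sub_indicator_one, ← abs_indicator_one_sub_indicator_one,
    ← abs_indicator_one_sub_indicator_one, hrest, abs_le]
  constructor <;> linarith [le_abs_self (χ E y - χ B y), neg_abs_le (χ E y - χ B y),
    le_abs_self (χ E₁ y - χ B₁ y), neg_abs_le (χ E₁ y - χ B₁ y),
    le_abs_self (χ E₂ y - χ B₂ y), neg_abs_le (χ E₂ y - χ B₂ y)]

variable [MeasurableSpace α] {μ : Measure α}

lemma integrable_indicator_one {s : Set α} (hs : MeasurableSet s) (hμs : μ s ≠ ⊤) :
    Integrable (χ s) μ :=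
  (integrable_indicator_iff hs).2 (integrableOn_const hμs)

lemma integral_indicator_one_sub_sub {s t u : Set α} (hs : MeasurableSet s) (ht : MeasurableSet t)
    (hu : MeasurableSet u) (hμs : μ s ≠ ⊤) (hμt : μ t ≠ ⊤) (hμu : μ u ≠ ⊤) :
    ∫ y, (χ s y - χ t y - χ u y) ∂μ = μ.real s - μ.real t - μ.real u := by
  have hχs := integrable_indicator_one hs hμs
  have hχt := integrable_indicator_one ht hμt
  rw [integral_sub (f := fun y => χ s y - χ t y) (hχs.sub hχt) (integrable_indicator_one hu hμu),
    integral_sub hχs hχt, integral_indicator_const _ hs, integral_indicator_const _ ht,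
    integral_indicator_const _ hu]
  simp only [smul_eq_mul, mul_one]

lemma measureReal_sub_sub_le_integral_abs {s t u : Set α} (hs : MeasurableSet s)
    (ht : MeasurableSet t) (hu : MeasurableSet u) (hμs : μ s ≠ ⊤) (hμt : μ t ≠ ⊤) (hμu : μ u ≠ ⊤) :
    μ.real s - μ.real t - μ.real u ≤ ∫ y, |χ s y - χ t y - χ u y| ∂μ := by
  rw [← integral_indicator_one_sub_sub hs ht hu hμs hμt hμu]
  exact (le_abs_self _).trans abs_integral_le_integral_abs

lemma integral_abs_indicator_sub_sub_sub_le {E E₁ E₂ B B₁ B₂ : Set α} (hE : MeasurableSet E)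
    (hE₁ : MeasurableSet E₁) (hE₂ : MeasurableSet E₂) (hB : MeasurableSet B)
    (hB₁ : MeasurableSet B₁) (hB₂ : MeasurableSet B₂) (hμE : μ E ≠ ⊤) (hsub : E₁ ∪ E₂ ⊆ E)
    (hdisj : Disjoint E₁ E₂) (hμB : μ B = μ E) (hμB₁ : μ B₁ = μ E₁) (hμB₂ : μ B₂ = μ E₂) :
    ∫ y, |χ B y - χ B₁ y - χ B₂ y| ∂μ - (μ.real B - μ.real B₁ - μ.real B₂)
      ≤ μ.real (E ∆ B) + μ.real (E₁ ∆ B₁) + μ.real (E₂ ∆ B₂) := by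
  have hμE₁ : μ E₁ ≠ ⊤ := measure_ne_top_of_subset (subset_union_left.trans hsub) hμE
  have hμE₂ : μ E₂ ≠ ⊤ := measure_ne_top_of_subset (subset_union_right.trans hsub) hμE
  have h₀ := integrable_indicator_one (hE.symmDiff hB) (measure_symmDiff_ne_top hμE (hμB ▸ hμE))
  have h₁ := integrable_indicator_one (hE₁.symmDiff hB₁)
    (measure_symmDiff_ne_top hμE₁ (hμB₁ ▸ hμE₁))
  have h₂ := integrable_indicator_one (hE₂.symmDiff hB₂)
    (measure_symmDiff_ne_top hμE₂ (hμB₂ ▸ hμE₂))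
  have h₃ := integrable_indicator_one (μ := μ) (hE.diff (hE₁.union hE₂))
    (measure_ne_top_of_subset sdiff_subset hμE)
  simp only [measureReal_def, hμB, hμB₁, hμB₂, sub_le_iff_le_add]
  refine (integral_mono_of_nonneg (ae_of_all _ fun _ => abs_nonneg _) (((h₀.add h₁).add h₂).add h₃)
    (ae_of_all _ (abs_indicator_sub_sub_le B B₁ B₂ hsub hdisj))).trans_eq ?_
  rw [integral_add' ((h₀.add h₁).add h₂) h₃, integral_add' (h₀.add h₁) h₂, integral_add' h₀ h₁,
    integral_indicator_const _ (hE.symmDiff hB), integral_indicator_const _ (hE₁.symmDiff hB₁),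
    integral_indicator_const _ (hE₂.symmDiff hB₂),
    integral_indicator_const _ (hE.diff (hE₁.union hE₂)),
    measureReal_sdiff hsub (hE₁.union hE₂) hμE, measureReal_union hdisj hE₂ hμE₁ hμE₂]
  simp only [smul_eq_mul, mul_one, measureReal_def]
  ring

end Indicator

lemma rpow_weighted_mean_three_le {p : ℝ} (hp : 1 ≤ p) {w₁ w₂ w₃ z₁ z₂ z₃ : ℝ} (hw₁ : 0 ≤ w₁)
    (hw₂ : 0 ≤ w₂) (hw₃ : 0 ≤ w₃) (hw : 0 < w₁ + w₂ + w₃) (hz₁ : 0 ≤ z₁) (hz₂ : 0 ≤ z₂)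
    (hz₃ : 0 ≤ z₃) :
    ((w₁ * z₁ + w₂ * z₂ + w₃ * z₃) / (w₁ + w₂ + w₃)) ^ p
      ≤ (w₁ * z₁ ^ p + w₂ * z₂ ^ p + w₃ * z₃ ^ p) / (w₁ + w₂ + w₃) := by
  have := (convexOn_rpow hp).map_centerMass_le (t := Finset.univ) (w := ![w₁, w₂, w₃])
    (p := ![z₁, z₂, z₃]) (by simp [Fin.forall_fin_succ, *]) (by simpa [Fin.sum_univ_three])
    (by simp [Fin.forall_fin_succ, *])
  simpa [Finset.centerMass, Fin.sum_univ_three, div_eq_inv_mul] using this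

lemma le_of_forall_pos_le_apply_add {f : ℝ → ℝ} {b c : ℝ} (hf : ContinuousAt f c)
    (h : ∀ ε > 0, b ≤ f (c + ε)) : b ≤ f c := by
  have hlim : Tendsto (fun ε => f (c + ε)) (𝓝[>] 0) (𝓝 (f c)) := by
    refine hf.tendsto.comp (tendsto_nhdsWithin_of_tendsto_nhds ?_)
    simpa using ((continuous_const_add c).tendsto 0)
  exact ge_of_tendsto hlim (eventually_nhdsWithin_of_forall h)

lemma exists_ball_measure_eq {E : Type*} [NormedAddCommGroup E] [NormedSpace ℝ E]
    [MeasurableSpace E] [BorelSpace E] [FiniteDimensional ℝ E] [Nontrivial E] (μ : Measure E)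
    [μ.IsAddHaarMeasure] (x : E) {v : ENNReal} (hv : v ≠ ⊤) :
    ∃ r : ℝ, μ (ball x r) = v := by
  set d := Module.finrank ℝ E
  set K := μ (ball 0 1)
  have hK : 0 < K.toReal := ENNReal.toReal_pos (measure_ball_pos μ 0 one_pos).ne' measure_ball_lt_top.ne
  have hq : 0 ≤ v.toReal / K.toReal := by positivity
  refine ⟨(v.toReal / K.toReal) ^ (d⁻¹ : ℝ), ?_⟩
  rw [Measure.addHaar_ball μ x (by positivity), Real.rpow_inv_natCast_pow hq Module.finrank_pos.ne',
    ← ENNReal.ofReal_toReal measure_ball_lt_top.ne, ← ENNReal.ofReal_mul hq, div_mul_cancel₀ _ hK.ne',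
    ENNReal.ofReal_toReal hv]

lemma fraenkelAsymmetry_nonneg {n : ℕ} (E : Set (EuclideanSpace ℝ (Fin n))) :
    0 ≤ fraenkelAsymmetry E :=
  Real.sInf_nonneg (by rintro t ⟨x, r, -, rfl⟩; positivity)

lemma exists_ball_measureReal_symmDiff_lt {n : ℕ} (hn : 1 ≤ n) {E : Set (EuclideanSpace ℝ (Fin n))}
    (h0 : 0 < volume E) (hfin : volume E < ⊤) {ε : ℝ} (hε : 0 < ε) :
    ∃ (x : EuclideanSpace ℝ (Fin n)) (r : ℝ), volume (ball x r) = volume E ∧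
      volume.real (E ∆ ball x r) < volume.real E * (fraenkelAsymmetry E + ε) := by
  have : Nonempty (Fin n) := ⟨⟨0, hn⟩⟩
  obtain ⟨r, hr⟩ := exists_ball_measure_eq volume (0 : EuclideanSpace ℝ (Fin n)) hfin.ne
  obtain ⟨_, ⟨x, r, hv, rfl⟩, hlt⟩ : ∃ t ∈ _, t < fraenkelAsymmetry E + ε :=
    Real.lt_sInf_add_pos (by exact ⟨_, 0, r, hr, rfl⟩) hε
  refine ⟨x, r, hv, ?_⟩
  rwa [div_lt_iff₀' (ENNReal.toReal_pos h0.ne' hfin.ne)] at hlt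

/-- Let `q > 1` and let `E, E₁, E₂ ⊆ ℝⁿ` be sets of positive finite measure with
`E₁ ∪ E₂ ⊆ E` and `E₁ ∩ E₂ = ∅`.  Then
`(|E| D(E)^q + |E₁| D(E₁)^q + |E₂| D(E₂)^q) / (|E| + |E₁ ∪ E₂|)` is at least the infimum,
over balls `B, B₁, B₂` with `|B| = |E|`, `|B₁| = |E₁|`, `|B₂| = |E₂|`, of
`[(‖χ_B − χ_{B₁} − χ_{B₂}‖_{L¹} − (|B| − |B₁| − |B₂|)) / (|E| + |E₁ ∪ E₂|)]^q`. -/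
theorem fraenkel_three_sets_lower_bound {n : ℕ} (hn : 1 ≤ n) (q : ℝ) (hq : 1 < q)
    (E E₁ E₂ : Set (EuclideanSpace ℝ (Fin n)))
    (hE : MeasurableSet E) (hE₁ : MeasurableSet E₁) (hE₂ : MeasurableSet E₂)
    (h0 : 0 < volume E) (hfin : volume E < ⊤)
    (h0₁ : 0 < volume E₁) (hfin₁ : volume E₁ < ⊤)
    (h0₂ : 0 < volume E₂) (hfin₂ : volume E₂ < ⊤)
    (hsub : E₁ ∪ E₂ ⊆ E) (hdisj : E₁ ∩ E₂ = ∅) :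
    ((volume E).toReal * fraenkelAsymmetry E ^ q +
        (volume E₁).toReal * fraenkelAsymmetry E₁ ^ q +
        (volume E₂).toReal * fraenkelAsymmetry E₂ ^ q) /
      ((volume E).toReal + (volume (E₁ ∪ E₂)).toReal) ≥
    sInf {t : ℝ | ∃ (x x₁ x₂ : EuclideanSpace ℝ (Fin n)) (r r₁ r₂ : ℝ),
      volume (ball x r) = volume E ∧ volume (ball x₁ r₁) = volume E₁ ∧
      volume (ball x₂ r₂) = volume E₂ ∧
      t = (((∫ y, |(ball x r).indicator (fun _ => (1 : ℝ)) y -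
              (ball x₁ r₁).indicator (fun _ => (1 : ℝ)) y -
              (ball x₂ r₂).indicator (fun _ => (1 : ℝ)) y|) -
            ((volume (ball x r)).toReal - (volume (ball x₁ r₁)).toReal -
              (volume (ball x₂ r₂)).toReal)) /
          ((volume E).toReal + (volume (E₁ ∪ E₂)).toReal)) ^ q} := by
  have hdisj' : Disjoint E₁ E₂ := disjoint_iff_inter_eq_empty.2 hdisj
  rw [measure_union hdisj' hE₂, ENNReal.toReal_add hfin₁.ne hfin₂.ne, ← add_assoc]
  have hM : 0 < (volume E).toReal + (volume E₁).toReal + (volume E₂).toReal := by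
    have := ENNReal.toReal_pos h0.ne' hfin.ne
    positivity
  have hdefect_nonneg (x x₁ x₂ : EuclideanSpace ℝ (Fin n)) (r r₁ r₂ : ℝ) :
      0 ≤ ((∫ y, |χ (ball x r) y - χ (ball x₁ r₁) y - χ (ball x₂ r₂) y|) -
        ((volume (ball x r)).toReal - (volume (ball x₁ r₁)).toReal -
          (volume (ball x₂ r₂)).toReal)) / ((volume E).toReal + (volume E₁).toReal + (volume E₂).toReal) :=
    div_nonneg (sub_nonneg.2 (measureReal_sub_sub_le_integral_abs measurableSet_ball
      measurableSet_ball measurableSet_ball measure_ball_lt_top.ne measure_ball_lt_top.ne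
      measure_ball_lt_top.ne)) hM.le
  refine le_trans ?_ (rpow_weighted_mean_three_le hq.le ENNReal.toReal_nonneg ENNReal.toReal_nonneg
    ENNReal.toReal_nonneg hM (fraenkelAsymmetry_nonneg E) (fraenkelAsymmetry_nonneg E₁)
    (fraenkelAsymmetry_nonneg E₂))
  have hq₀ : 0 ≤ q := zero_le_one.trans hq.le
  refine le_of_forall_pos_le_apply_add (f := (· ^ q))
    (Real.continuousAt_rpow_const _ q (Or.inr hq₀)) fun ε hε => ?_
  obtain ⟨x, r, hv, hx⟩ := exists_ball_measureReal_symmDiff_lt hn h0 hfin hε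
  obtain ⟨x₁, r₁, hv₁, hx₁⟩ := exists_ball_measureReal_symmDiff_lt hn h0₁ hfin₁ hε
  obtain ⟨x₂, r₂, hv₂, hx₂⟩ := exists_ball_measureReal_symmDiff_lt hn h0₂ hfin₂ hε
  refine csInf_le_of_le ⟨0, ?_⟩ ⟨x, x₁, x₂, r, r₁, r₂, hv, hv₁, hv₂, rfl⟩
    (Real.rpow_le_rpow (hdefect_nonneg x x₁ x₂ r r₁ r₂) ?_ hq₀)
  · rintro _ ⟨x, x₁, x₂, r, r₁, r₂, -, -, -, rfl⟩
    exact Real.rpow_nonneg (hdefect_nonneg x x₁ x₂ r r₁ r₂) q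
  have key := integral_abs_indicator_sub_sub_sub_le hE hE₁ hE₂ measurableSet_ball
    measurableSet_ball measurableSet_ball hfin.ne hsub hdisj' hv hv₁ hv₂
  rw [div_le_iff₀ hM, add_mul, div_mul_cancel₀ _ hM.ne']
  simp only [measureReal_def] at key hx hx₁ hx₂
  linarith
end

section
/- Superadditivity-type estimate: let n ≥ 2 and define g(β₁, β₂) = (β₁^{1/n} + β₂^{1/n})ⁿ − (β₁ + β₂) for β₁, β₂ > 0. Then for all x, y ≥ 0, g(1 + x, 1 + y) ≥ (2ⁿ − 2)(1 + x + y)^{1/n}. -/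
/-- Superadditivity-type estimate: with `g(β₁, β₂) = (β₁^{1/n} + β₂^{1/n})ⁿ − (β₁ + β₂)`,
for all `x, y ≥ 0` and `n ≥ 2`, `g(1 + x, 1 + y) ≥ (2ⁿ − 2)(1 + x + y)^{1/n}`. -/
theorem g_one_add_lower_bound (n : ℕ) (hn : 2 ≤ n) (x y : ℝ) (hx : 0 ≤ x) (hy : 0 ≤ y) :
    ((1 + x) ^ (1 / (n : ℝ)) + (1 + y) ^ (1 / (n : ℝ))) ^ n - ((1 + x) + (1 + y)) ≥
      ((2 : ℝ) ^ n - 2) * (1 + x + y) ^ (1 / (n : ℝ)) := by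
  have hn0 : 0 < n := by omega
  have hnR : (0:ℝ) < n := by exact_mod_cast hn0
  set a := (1 + x) ^ (1 / (n : ℝ)) with ha
  set b := (1 + y) ^ (1 / (n : ℝ)) with hb
  set c := (1 + x + y) ^ (1 / (n : ℝ)) with hc
  have hx1 : (1:ℝ) ≤ 1 + x := by linarith
  have hy1 : (1:ℝ) ≤ 1 + y := by linarith
  have hinv : (0:ℝ) ≤ 1 / n := by positivity
  have ha1 : 1 ≤ a := Real.one_le_rpow hx1 hinv
  have hb1 : 1 ≤ b := Real.one_le_rpow hy1 hinv
  have han : a ^ n = 1 + x := by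
    rw [ha, ← Real.rpow_natCast (_ ^ _) n, ← Real.rpow_mul (by linarith),
      one_div_mul_cancel hnR.ne', Real.rpow_one]
  have hbn : b ^ n = 1 + y := by
    rw [hb, ← Real.rpow_natCast (_ ^ _) n, ← Real.rpow_mul (by linarith),
      one_div_mul_cancel hnR.ne', Real.rpow_one]
  have habc : c ≤ a * b := by
    rw [ha, hb, ← Real.mul_rpow (by linarith) (by linarith), hc]
    exact Real.rpow_le_rpow (by linarith) (by nlinarith) hinv
  have hc0 : 0 ≤ c := Real.rpow_nonneg (by linarith) _
  set f : ℕ → ℝ := fun k => a ^ k * b ^ (n - k) * (n.choose k : ℝ) with hf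
  have hexp : (a + b) ^ n = ∑ k ∈ Finset.range (n + 1), f k := add_pow a b n
  have hsplit : ∑ k ∈ Finset.range (n + 1), f k
      = f 0 + (∑ k ∈ Finset.Ico 1 n, f k) + f n := by
    rw [Finset.sum_range_succ, Finset.range_eq_Ico,
      Finset.sum_eq_sum_Ico_succ_bot hn0]
  have hf0 : f 0 = 1 + y := by simp [hf, hbn]
  have hfn : f n = 1 + x := by simp [hf, han]
  -- lower bound each middle term
  have hterm : ∀ k ∈ Finset.Ico 1 n, (n.choose k : ℝ) * c ≤ f k := by
    intro k hk
    rw [Finset.mem_Ico] at hk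
    have hak : a ≤ a ^ k := le_self_pow₀ (by linarith) (by omega)
    have hbk : b ≤ b ^ (n - k) := le_self_pow₀ (by linarith) (by omega)
    have h1 : c ≤ a ^ k * b ^ (n - k) := by
      calc c ≤ a * b := habc
        _ ≤ a ^ k * b ^ (n - k) := by
            apply mul_le_mul hak hbk (by linarith) (by positivity)
    have hch : (0:ℝ) ≤ (n.choose k : ℝ) := by positivity
    calc (n.choose k : ℝ) * c ≤ (n.choose k : ℝ) * (a ^ k * b ^ (n - k)) :=
          mul_le_mul_of_nonneg_left h1 hch
      _ = f k := by rw [hf]; ring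
  have hsum : (∑ k ∈ Finset.Ico 1 n, ((n.choose k : ℝ))) * c ≤
      ∑ k ∈ Finset.Ico 1 n, f k := by
    rw [Finset.sum_mul]
    exact Finset.sum_le_sum hterm
  -- the choose sum
  have hchoose : ∑ k ∈ Finset.Ico 1 n, ((n.choose k : ℝ)) = 2 ^ n - 2 := by
    have h : ∑ k ∈ Finset.range (n + 1), ((n.choose k : ℝ)) = 2 ^ n := by
      exact_mod_cast congrArg (Nat.cast : ℕ → ℝ) (Nat.sum_range_choose n)
    rw [Finset.sum_range_succ, Finset.range_eq_Ico,
      Finset.sum_eq_sum_Ico_succ_bot hn0] at h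
    simp at h
    linarith
  rw [hchoose] at hsum
  have := hexp
  rw [hsplit, hf0, hfn] at this
  rw [ge_iff_le, this]
  linarith
end
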